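/- Deterministic Robbins–Siegmund lemma: let (X_t), (Y_t), (Z_t) be sequences of nonnegative real numbers satisfying X_t ≤ X_{t-1} - Y_{t-1} + Z_{t-1} for all t ≥ 1, and suppose the series ∑ Z_t converges. Then (X_t) converges and ∑ Y_t < ∞. -/

import Mathlib

/-! The quantity `V t = X t + ∑_{s<t} Y s - ∑_{s<t} Z s` is nonincreasing by the recursion and
bounded below because `X` is bounded below and the partial sums of `Z` are bounded, so it
converges. Bounding `∑_{s<t} Y s` by `V 0 - X t + ∑_{s<t} Z s` makes `Y` summable, and then
`X t = V t - ∑_{s<t} Y s + ∑_{s<t} Z s` is a sum of convergent sequences. -/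

open Filter Finset Topology

section RobbinsSiegmund

variable {X Y Z : ℕ → ℝ}

theorem antitone_add_sum_range_sub_sum_range (hrec : ∀ t, X (t + 1) ≤ X t - Y t + Z t) :
    Antitone fun t => X t + ∑ s ∈ range t, Y s - ∑ s ∈ range t, Z s :=
  antitone_nat_of_succ_le fun t => by
    simp only [sum_range_succ]
    linarith [hrec t]

theorem tendsto_and_summable_of_le_sub_add (hX : BddBelow (Set.range X)) (hY : ∀ t, 0 ≤ Y t)
    (hZ : Summable Z) (hrec : ∀ t, X (t + 1) ≤ X t - Y t + Z t) :
    (∃ L, Tendsto X atTop (𝓝 L)) ∧ Summable Y := by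
  set V : ℕ → ℝ := fun t => X t + ∑ s ∈ range t, Y s - ∑ s ∈ range t, Z s with hV
  have hV_anti : Antitone V := antitone_add_sum_range_sub_sum_range hrec
  obtain ⟨a, ha⟩ := hX
  obtain ⟨b, hb⟩ := hZ.hasSum.tendsto_sum_nat.bddAbove_range
  have hXa (t : ℕ) : a ≤ X t := ha ⟨t, rfl⟩
  have hZb (t : ℕ) : ∑ s ∈ range t, Z s ≤ b := hb ⟨t, rfl⟩
  have hYsum : Summable Y := by
    refine summable_of_sum_range_le hY (c := V 0 - a + b) fun t => ?_
    have := hV_anti (Nat.zero_le t)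
    linarith [hXa t, hZb t]
  have hV_bdd : BddBelow (Set.range V) := by
    refine ⟨a - b, ?_⟩
    rintro _ ⟨t, rfl⟩
    linarith [hXa t, hZb t, sum_nonneg fun s (_ : s ∈ range t) => hY s]
  refine ⟨⟨(⨅ t, V t) - ∑' s, Y s + ∑' s, Z s, ?_⟩, hYsum⟩
  have hX_eq : X = fun t => V t - ∑ s ∈ range t, Y s + ∑ s ∈ range t, Z s := by
    ext t
    simp only [hV]
    ring
  rw [hX_eq]
  exact ((tendsto_atTop_ciInf hV_anti hV_bdd).sub hYsum.hasSum.tendsto_sum_nat).add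
    hZ.hasSum.tendsto_sum_nat

end RobbinsSiegmund

theorem stmt_6_general (X Y Z : ℕ → ℝ)
    (hX : ∀ t, 0 ≤ X t) (hY : ∀ t, 0 ≤ Y t)
    (hrec : ∀ t, 1 ≤ t → X t ≤ X (t - 1) - Y (t - 1) + Z (t - 1))
    (hZsum : Summable Z) :
    (∃ L : ℝ, Filter.Tendsto X Filter.atTop (nhds L)) ∧ Summable Y :=
  tendsto_and_summable_of_le_sub_add ⟨0, by rintro _ ⟨t, rfl⟩; exact hX t⟩ hY hZsum
    fun t => by simpa using hrec (t + 1) (Nat.le_add_left 1 t)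

theorem stmt_6 (X Y Z : ℕ → ℝ)
    (hX : ∀ t, 0 ≤ X t) (hY : ∀ t, 0 ≤ Y t) (hZ : ∀ t, 0 ≤ Z t)
    (hrec : ∀ t, 1 ≤ t → X t ≤ X (t - 1) - Y (t - 1) + Z (t - 1))
    (hZsum : Summable Z) :
    (∃ L : ℝ, Filter.Tendsto X Filter.atTop (nhds L)) ∧ Summable Y :=
  stmt_6_general X Y Z hX hY hrec hZsum
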